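/- In the local model, for all indices i, j and every point (x,y) ∈ U × ℝⁿ, the Lie brackets of adapted frame fields satisfy [X_i, X_{j̄}](x,y) = Σ_m Γ^m_{ji}(x) X_{m̄}(x,y) and [X_{ī}, X_{j̄}] = 0. -/

import Mathlib

open scoped BigOperators

namespace TangentLift

/-- A point of the tangent bundle `TU = U × ℝⁿ` in coordinates `(x, y)`. -/
abbrev Pt (n : ℕ) := (Fin n → ℝ) × (Fin n → ℝ)

variable {n : ℕ}

/-- Partial derivative `∂_i f` of a function on `ℝⁿ`. -/
noncomputable def pd (i : Fin n) (f : (Fin n → ℝ) → ℝ) (x : Fin n → ℝ) : ℝ :=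
  fderiv ℝ f x (Pi.single i 1)

/-- The Christoffel symbols `Γ^k_{ij}` of a metric `g` given in coordinates. -/
noncomputable def Gam (g : (Fin n → ℝ) → Matrix (Fin n) (Fin n) ℝ)
    (k i j : Fin n) (x : Fin n → ℝ) : ℝ :=
  (1 / 2) * ∑ m, (g x)⁻¹ k m *
    (pd i (fun z => g z m j) x + pd j (fun z => g z m i) x - pd m (fun z => g z i j) x)

/-- The curvature tensor `K_{ijk}{}^m` of the metric `g`. -/
noncomputable def Curv (g : (Fin n → ℝ) → Matrix (Fin n) (Fin n) ℝ)
    (i j k m : Fin n) (x : Fin n → ℝ) : ℝ :=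
  pd i (Gam g m j k) x - pd j (Gam g m i k) x
    + ∑ a, (Gam g m i a x * Gam g a j k x - Gam g m j a x * Gam g a i k x)

/-- The horizontal adapted frame field `X_h(x,y) = ∂/∂x^h − Σ_{a,m} y^a Γ^m_{ah}(x) ∂/∂y^m`. -/
noncomputable def XH (g : (Fin n → ℝ) → Matrix (Fin n) (Fin n) ℝ) (h : Fin n) (p : Pt n) :
    Pt n :=
  (Pi.single h 1, fun m => -∑ a, p.2 a * Gam g m a h p.1)

/-- The vertical adapted frame field `X_h̄(x,y) = ∂/∂y^h`. -/
noncomputable def XV (h : Fin n) (_p : Pt n) : Pt n := (0, Pi.single h 1)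

/-- Lie bracket of vector fields on `U × ℝⁿ`: `[V,W](p) = DW(p)(V(p)) − DV(p)(W(p))`. -/
noncomputable def lie (V W : Pt n → Pt n) (p : Pt n) : Pt n :=
  fderiv ℝ W p (V p) - fderiv ℝ V p (W p)

/-- Directional derivative of a function on `TU` along the vector field `Z`. -/
noncomputable def dirD (Z : Pt n → Pt n) (f : Pt n → ℝ) (p : Pt n) : ℝ :=
  fderiv ℝ f p (Z p)

/-- The vertical components of a tangent vector `v` at `p` in the adapted frame,
i.e. the coefficients of the `X_m̄` in the expansion of `v`. -/
noncomputable def ver (g : (Fin n → ℝ) → Matrix (Fin n) (Fin n) ℝ) (p : Pt n) (v : Pt n) :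
    Fin n → ℝ :=
  fun m => v.2 m + ∑ a, ∑ i, p.2 a * Gam g m a i p.1 * v.1 i

/-- The bilinear-form field `g₁` on `TU`: `g₁(X_i,X_j) = g_{ij}`, vanishing on vertical
arguments. -/
noncomputable def g1 (g : (Fin n → ℝ) → Matrix (Fin n) (Fin n) ℝ) (p : Pt n) (v w : Pt n) : ℝ :=
  ∑ i, ∑ j, g p.1 i j * v.1 i * w.1 j

/-- The bilinear-form field `g₂` on `TU`: `g₂(X_i,X_j̄) = g₂(X_j̄,X_i) = g_{ij}`, vanishing on
two horizontal or two vertical arguments. -/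
noncomputable def g2 (g : (Fin n → ℝ) → Matrix (Fin n) (Fin n) ℝ) (p : Pt n) (v w : Pt n) : ℝ :=
  ∑ i, ∑ j, g p.1 i j * (v.1 i * ver g p w j + w.1 i * ver g p v j)

/-- The bilinear-form field `g₃` on `TU`: `g₃(X_ī,X_j̄) = g_{ij}`, vanishing on horizontal
arguments. -/
noncomputable def g3 (g : (Fin n → ℝ) → Matrix (Fin n) (Fin n) ℝ) (p : Pt n) (v w : Pt n) : ℝ :=
  ∑ i, ∑ j, g p.1 i j * ver g p v i * ver g p w j

/-- The lift metric `g̃ = a g₁ + b g₂ + c g₃` on `TU`. -/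
noncomputable def gLift (g : (Fin n → ℝ) → Matrix (Fin n) (Fin n) ℝ) (a b c : ℝ)
    (p : Pt n) (v w : Pt n) : ℝ :=
  a * g1 g p v w + b * g2 g p v w + c * g3 g p v w

/-- Lie derivative of a field `S` of bilinear forms along the vector field `X`, evaluated on
the vector fields `V`, `W` at the point `p`:
`(L_X S)(V,W) = X·(S(V,W)) − S([X,V],W) − S(V,[X,W])`. -/
noncomputable def lieDer (X : Pt n → Pt n) (S : Pt n → Pt n → Pt n → ℝ)
    (V W : Pt n → Pt n) (p : Pt n) : ℝ :=
  dirD X (fun q => S q (V q) (W q)) p - S p (lie X V p) (W p) - S p (V p) (lie X W p)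

/-- `g` is a Riemannian metric on `U` given in coordinates: each component is smooth on `U`,
and at each point of `U` the matrix `(g_{ij})` is symmetric positive definite. -/
def IsMetric (U : Set (Fin n → ℝ)) (g : (Fin n → ℝ) → Matrix (Fin n) (Fin n) ℝ) : Prop :=
  (∀ i j, ContDiffOn ℝ (⊤ : ℕ∞) (fun x => g x i j) U) ∧
    (∀ x ∈ U, (g x).IsSymm) ∧ (∀ x ∈ U, (g x).PosDef)

/-- The vector field `X = Σ_h X^h X_h + Σ_h X^h̄ X_h̄` on `TU` with the given components in
the adapted frame; for a fiber-preserving field the `X^h` are functions of `x` alone. -/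
noncomputable def mkVF (g : (Fin n → ℝ) → Matrix (Fin n) (Fin n) ℝ)
    (Xh' : Fin n → (Fin n → ℝ) → ℝ) (Xv' : Fin n → Pt n → ℝ) (p : Pt n) : Pt n :=
  (∑ h, Xh' h p.1 • XH g h p) + ∑ h, Xv' h p • XV h p

/-- Smoothness of the components of a fiber-preserving vector field on `TU`. -/
def SmoothComponents (U : Set (Fin n → ℝ)) (Xh' : Fin n → (Fin n → ℝ) → ℝ)
    (Xv' : Fin n → Pt n → ℝ) : Prop :=
  (∀ h, ContDiffOn ℝ (⊤ : ℕ∞) (Xh' h) U) ∧ (∀ h, ContDiffOn ℝ (⊤ : ℕ∞) (Xv' h) (U ×ˢ Set.univ))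

/-- `X` is a conformal vector field for the lift metric `g̃ = a g₁ + b g₂ + c g₃` with
conformal factor `Ω`, i.e. `L_X g̃ = 2 Ω g̃` as fields of bilinear forms on `TU`, tested
against all smooth vector fields on `TU`. -/
def Conformal (U : Set (Fin n → ℝ)) (g : (Fin n → ℝ) → Matrix (Fin n) (Fin n) ℝ)
    (a b c : ℝ) (X : Pt n → Pt n) (Ω : Pt n → ℝ) : Prop :=
  ∀ V W : Pt n → Pt n, ContDiffOn ℝ (⊤ : ℕ∞) V (U ×ˢ Set.univ) → ContDiffOn ℝ (⊤ : ℕ∞) W (U ×ˢ Set.univ) →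
    ∀ p : Pt n, p.1 ∈ U →
      lieDer X (gLift g a b c) V W p = 2 * Ω p * gLift g a b c p (V p) (W p)

/-- The components `(L_V g)_{ij}` of the Lie derivative of `g` along
`V = Σ_h V^h ∂/∂x^h` on `U`. -/
noncomputable def lieG (g : (Fin n → ℝ) → Matrix (Fin n) (Fin n) ℝ)
    (Vf : Fin n → (Fin n → ℝ) → ℝ) (i j : Fin n) (x : Fin n → ℝ) : ℝ :=
  ∑ a, (Vf a x * pd a (fun z => g z i j) x + pd i (Vf a) x * g x a j + pd j (Vf a) x * g x i a)

/-- The covariant derivative `∇_i V^m = ∂_i V^m + Σ_a Γ^m_{ia} V^a`. -/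
noncomputable def covD (g : (Fin n → ℝ) → Matrix (Fin n) (Fin n) ℝ)
    (Vf : Fin n → (Fin n → ℝ) → ℝ) (i m : Fin n) (x : Fin n → ℝ) : ℝ :=
  pd i (Vf m) x + ∑ a, Gam g m i a x * Vf a x

/-- The complete lift `X^C = Σ_h V^h X_h + Σ_{h,m} y^m (Σ_a Γ^h_{ma} V^a + ∂_m V^h) X_h̄`
of the vector field `V = Σ_h V^h ∂/∂x^h` on `U`. -/
noncomputable def completeLift (g : (Fin n → ℝ) → Matrix (Fin n) (Fin n) ℝ)
    (Vf : Fin n → (Fin n → ℝ) → ℝ) (p : Pt n) : Pt n :=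
  (∑ h, Vf h p.1 • XH g h p)
    + ∑ h, (∑ m, p.2 m * ((∑ a, Gam g h m a p.1 * Vf a p.1) + pd m (Vf h) p.1)) • XV h p

/-- The vertical lift `X^V = Σ_h V^h X_h̄` of `V = Σ_h V^h ∂/∂x^h`. -/
noncomputable def vertLift (Vf : Fin n → (Fin n → ℝ) → ℝ) (p : Pt n) : Pt n :=
  ∑ h, Vf h p.1 • XV h p

/-- The horizontal lift `X^H = Σ_h V^h X_h` of `V = Σ_h V^h ∂/∂x^h`. -/
noncomputable def horLift (g : (Fin n → ℝ) → Matrix (Fin n) (Fin n) ℝ)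
    (Vf : Fin n → (Fin n → ℝ) → ℝ) (p : Pt n) : Pt n :=
  ∑ h, Vf h p.1 • XH g h p


section Aux

theorem diffAt_prod {ι E : Type*} [NormedAddCommGroup E] [NormedSpace ℝ E]
    [DecidableEq ι] {u : Finset ι} {f : ι → E → ℝ} {x : E}
    (h : ∀ i ∈ u, DifferentiableAt ℝ (f i) x) :
    DifferentiableAt ℝ (fun x => ∏ i ∈ u, f i x) x :=
  (HasFDerivAt.finset_prod fun i hi => (h i hi).hasFDerivAt).differentiableAt

theorem diffAt_det {E : Type*} [NormedAddCommGroup E] [NormedSpace ℝ E]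
    {A : E → Matrix (Fin n) (Fin n) ℝ} {x : E}
    (h : ∀ i j, DifferentiableAt ℝ (fun x => A x i j) x) :
    DifferentiableAt ℝ (fun x => (A x).det) x := by
  simp only [Matrix.det_apply']
  exact DifferentiableAt.fun_sum fun σ _ => ((diffAt_prod fun i _ => h (σ i) i).const_mul _)

theorem diffAt_inv_entry {E : Type*} [NormedAddCommGroup E] [NormedSpace ℝ E]
    {A : E → Matrix (Fin n) (Fin n) ℝ} {x : E}
    (h : ∀ i j, DifferentiableAt ℝ (fun x => A x i j) x)
    (hdet : (A x).det ≠ 0) (k m : Fin n) :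
    DifferentiableAt ℝ (fun x => (A x)⁻¹ k m) x := by
  have heq : (fun x => (A x)⁻¹ k m) = fun x => ((A x).det)⁻¹ * (A x).adjugate k m := by
    funext y
    rw [Matrix.inv_def, Matrix.smul_apply, Ring.inverse_eq_inv', smul_eq_mul]
  rw [heq]
  refine DifferentiableAt.mul ((diffAt_det h).inv hdet) ?_
  simp only [Matrix.adjugate_apply]
  exact diffAt_det fun a b => by
    simp only [Matrix.updateRow_apply]
    by_cases hab : a = m <;> simp [hab, h a b]

theorem diffAt_pd {U : Set (Fin n → ℝ)} (hU : IsOpen U) {f : (Fin n → ℝ) → ℝ}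
    (hf : ContDiffOn ℝ (⊤ : ℕ∞) f U) {x : Fin n → ℝ} (hx : x ∈ U) (i : Fin n) :
    DifferentiableAt ℝ (pd i f) x := by
  have h1 : ContDiffOn ℝ (⊤ : ℕ∞) (fun y => fderiv ℝ f y) U := hf.fderiv_of_isOpen hU (by simp)
  have h2 : ContDiffOn ℝ (⊤ : ℕ∞) (pd i f) U :=
    (ContinuousLinearMap.apply ℝ ℝ (Pi.single i 1 : Fin n → ℝ)).contDiff.comp_contDiffOn h1
  exact ((h2.differentiableOn (by simp)) x hx).differentiableAt (hU.mem_nhds hx)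

theorem diffAt_Gam {U : Set (Fin n → ℝ)} (hU : IsOpen U)
    {g : (Fin n → ℝ) → Matrix (Fin n) (Fin n) ℝ} (hg : IsMetric U g)
    {x : Fin n → ℝ} (hx : x ∈ U) (k i j : Fin n) :
    DifferentiableAt ℝ (Gam g k i j) x := by
  have hent : ∀ a b, DifferentiableAt ℝ (fun y => g y a b) x := fun a b =>
    (((hg.1 a b).differentiableOn (by simp)) x hx).differentiableAt (hU.mem_nhds hx)
  have hdet : (g x).det ≠ 0 := ne_of_gt (hg.2.2 x hx).det_pos
  unfold Gam
  refine DifferentiableAt.const_mul (DifferentiableAt.fun_sum fun m _ => ?_) _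
  refine (diffAt_inv_entry hent hdet k m).mul ?_
  exact ((diffAt_pd hU (hg.1 m j) hx i).add (diffAt_pd hU (hg.1 m i) hx j)).sub
    (diffAt_pd hU (hg.1 i j) hx m)

end Aux

/-- `[X_i, X_j̄](x,y) = Σ_m Γ^m_{ji}(x) X_m̄(x,y)` and `[X_ī, X_j̄] = 0`
for all `(x,y) ∈ U × ℝⁿ`. -/
theorem lie_horizontal_vertical (n : ℕ) (hn : 1 ≤ n) (U : Set (Fin n → ℝ)) (hU : IsOpen U)
    (g : (Fin n → ℝ) → Matrix (Fin n) (Fin n) ℝ) (hg : IsMetric U g)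
    (i j : Fin n) (p : Pt n) (hp : p.1 ∈ U) :
    lie (XH g i) (XV j) p = ∑ m, Gam g m j i p.1 • XV m p ∧
      lie (XV i) (XV j) p = 0 := by
  have hΓ : ∀ k a, DifferentiableAt ℝ (Gam g k a i) p.1 := fun k a =>
    diffAt_Gam hU hg hp k a i
  set v : Pt n := ((0 : Fin n → ℝ), Pi.single j 1) with hv
  set w : Pt n := ((0 : Fin n → ℝ), fun m => -(Gam g m j i p.1)) with hw
  -- differentiability of XH g i at p
  have hXH : DifferentiableAt ℝ (XH g i) p := by
    unfold XH
    refine DifferentiableAt.prodMk (differentiableAt_const _) ?_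
    rw [differentiableAt_pi]
    intro m
    refine DifferentiableAt.neg (DifferentiableAt.fun_sum fun a _ => DifferentiableAt.mul ?_ ?_)
    · exact (((ContinuousLinearMap.proj a).comp
        (ContinuousLinearMap.snd ℝ (Fin n → ℝ) (Fin n → ℝ))).differentiableAt :
          DifferentiableAt ℝ (fun q : Pt n => q.2 a) p)
    · exact (hΓ m a).comp p differentiableAt_fst
  have hc : HasDerivAt (fun t : ℝ => p + t • v) v 0 := by
    simpa using (((hasDerivAt_id (0 : ℝ)).smul_const v).const_add p)
  have hXH' : HasFDerivAt (XH g i) (fderiv ℝ (XH g i) p) (p + (0 : ℝ) • v) := by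
    simpa using hXH.hasFDerivAt
  have h1 : HasDerivAt (XH g i ∘ fun t : ℝ => p + t • v) (fderiv ℝ (XH g i) p v) 0 :=
    hXH'.comp_hasDerivAt 0 hc
  have h2 : HasDerivAt (XH g i ∘ fun t : ℝ => p + t • v) w 0 := by
    have heq : (XH g i ∘ fun t : ℝ => p + t • v) = fun t => XH g i p + t • w := by
      funext t
      unfold XH
      refine Prod.ext ?_ ?_
      · simp [hw]
      · funext m
        have hsum : ∑ a, (p.2 a + t * (Pi.single j 1 : Fin n → ℝ) a) * Gam g m a i p.1
            = (∑ a, p.2 a * Gam g m a i p.1) + t * Gam g m j i p.1 := by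
          simp only [add_mul, Finset.sum_add_distrib, mul_assoc]
          congr 1
          rw [← Finset.mul_sum]
          congr 1
          simp [Pi.single_apply, ite_mul]
        simp only [hv, hw, Function.comp, Prod.fst_add, Prod.snd_add, Prod.smul_fst,
          Prod.smul_snd, Pi.add_apply, Pi.smul_apply, smul_eq_mul, smul_zero, add_zero, mul_zero]
        rw [hsum]
        ring
    rw [heq]
    simpa using (((hasDerivAt_id (0 : ℝ)).smul_const w).const_add (XH g i p))
  have hfd : fderiv ℝ (XH g i) p v = w := h1.unique h2
  have hXVconst : ∀ (k : Fin n), (XV k : Pt n → Pt n) = fun _ => ((0 : Fin n → ℝ), Pi.single k 1) :=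
    fun k => rfl
  constructor
  · show fderiv ℝ (XV j) p (XH g i p) - fderiv ℝ (XH g i) p (XV j p) = _
    rw [hXVconst j, fderiv_fun_const]
    show (0 : Pt n →L[ℝ] Pt n) (XH g i p) - fderiv ℝ (XH g i) p v = _
    rw [hfd]
    refine Prod.ext ?_ ?_
    · simp [XV, hw, Prod.fst_sum]
    · funext k
      simp only [ContinuousLinearMap.zero_apply, Prod.fst_zero, Prod.snd_zero, zero_sub,
        Prod.snd_sub, Pi.sub_apply, hw, Prod.snd_sum, Finset.sum_apply]
      simp [XV, Pi.single_apply, mul_ite]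
  · show fderiv ℝ (XV j) p (XV i p) - fderiv ℝ (XV i) p (XV j p) = 0
    rw [hXVconst i, hXVconst j, fderiv_fun_const]
    simp


end TangentLift
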